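/- Let n ≥ 1 and d = 2^n. For p : Fin n → Fin 4, let σ_p be the n-qubit Pauli matrix: the matrix indexed by tuples x, y : Fin n → Fin 2 with entries σ_p(x, y) = ∏ᵢ τ_{p(i)}(xᵢ, yᵢ), where τ₀ = I, τ₁ = σ_x, τ₂ = σ_y, τ₃ = σ_z are the single-qubit Pauli matrices. Let U₁, U₂ be unitary d×d matrices and δ ≥ 0, and suppose that for every p : Fin n → Fin 4 one has D⁺(U₁·σ_p·U₁†, U₂·σ_p·U₂†) ≤ δ. Then D(U₁, U₂) ≤ δ. -/
import Mathlib


open Matrix Kronecker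

/-- The single-qubit Pauli matrices `I, σ_x, σ_y, σ_z`. -/
noncomputable def pauli1 : Fin 4 → Matrix (Fin 2) (Fin 2) ℂ
  | 0 => !![1, 0; 0, 1]
  | 1 => !![0, 1; 1, 0]
  | 2 => !![0, -Complex.I; Complex.I, 0]
  | 3 => !![1, 0; 0, -1]

/-- The `n`-qubit Pauli matrix `σ_p = τ_{p 0} ⊗ ⋯ ⊗ τ_{p (n-1)}`. -/
noncomputable def pauliN (n : ℕ) (p : Fin n → Fin 4) :
    Matrix (Fin n → Fin 2) (Fin n → Fin 2) ℂ :=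
  Matrix.of fun x y => ∏ i, pauli1 (p i) (x i) (y i)

/-- The Frobenius (Schatten 2-) norm `‖A‖₂ = √tr(A†A)` of a complex matrix. -/
noncomputable def frobNorm {m : Type*} [Fintype m] (A : Matrix m m ℂ) : ℝ :=
  Real.sqrt ((Aᴴ * A).trace.re)

/-- `D⁺(A,B) = (1/√(2d))·‖A − B‖₂` with `d` the dimension. -/
noncomputable def Dplus {m : Type*} [Fintype m] (A B : Matrix m m ℂ) : ℝ :=
  (1 / Real.sqrt (2 * (Fintype.card m : ℝ))) * frobNorm (A - B)

/-- `D(A,B) = (1/√(2d²))·‖A ⊗ conj A − B ⊗ conj B‖₂` with `d` the dimension. -/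
noncomputable def Ddist {m : Type*} [Fintype m] (A B : Matrix m m ℂ) : ℝ :=
  (1 / Real.sqrt (2 * (Fintype.card m : ℝ) ^ 2)) *
    frobNorm (A ⊗ₖ A.map (starRingEnd ℂ) - B ⊗ₖ B.map (starRingEnd ℂ))

section PauliLemmas

lemma pauli1_pair_sum (x a b y : Fin 2) :
    ∑ k : Fin 4, pauli1 k x a * pauli1 k b y = if x = y ∧ a = b then 2 else 0 := by
  fin_cases x <;> fin_cases a <;> fin_cases b <;> fin_cases y <;>
    (simp [Fin.sum_univ_four, pauli1]; try norm_num)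

lemma pauli1_herm (k : Fin 4) (x y : Fin 2) :
    star (pauli1 k y x) = pauli1 k x y := by
  fin_cases k <;> fin_cases x <;> fin_cases y <;> simp [pauli1]

lemma pauliN_herm (n : ℕ) (p : Fin n → Fin 4) : (pauliN n p)ᴴ = pauliN n p := by
  ext x y
  simp only [conjTranspose_apply, pauliN, Matrix.of_apply, star_prod]
  exact Finset.prod_congr rfl fun i _ => pauli1_herm _ _ _

lemma pauliN_pair_sum (n : ℕ) (x a b y : Fin n → Fin 2) :
    ∑ p : Fin n → Fin 4, pauliN n p x a * pauliN n p b y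
      = if x = y ∧ a = b then (2:ℂ)^n else 0 := by
  have h1 : ∀ p : Fin n → Fin 4, pauliN n p x a * pauliN n p b y
      = ∏ i, (pauli1 (p i) (x i) (a i) * pauli1 (p i) (b i) (y i)) := by
    intro p; simp [pauliN, Finset.prod_mul_distrib]
  simp_rw [h1]
  rw [← Fintype.prod_sum (fun i k => pauli1 k (x i) (a i) * pauli1 k (b i) (y i))]
  simp_rw [pauli1_pair_sum]
  by_cases hc : x = y ∧ a = b
  · simp [hc.1, hc.2]
  · rw [if_neg hc]
    have hex : ∃ i, ¬(x i = y i ∧ a i = b i) := by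
      by_contra hall
      push_neg at hall
      exact hc ⟨funext fun i => (hall i).1, funext fun i => (hall i).2⟩
    obtain ⟨i, hi⟩ := hex
    exact Finset.prod_eq_zero (Finset.mem_univ i) (if_neg hi)

lemma pauli_design (n : ℕ) (M : Matrix (Fin n → Fin 2) (Fin n → Fin 2) ℂ) :
    ∑ p : Fin n → Fin 4, pauliN n p * M * pauliN n p
      = ((2:ℂ)^n * M.trace) • 1 := by
  ext x y
  simp only [Matrix.sum_apply, Matrix.mul_apply, Matrix.smul_apply, Matrix.one_apply,
    Finset.sum_mul, smul_eq_mul]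
  rw [Finset.sum_comm]
  have h1 : ∀ b : Fin n → Fin 2,
      ∑ p : Fin n → Fin 4, ∑ a, pauliN n p x a * M a b * pauliN n p b y
        = ∑ a, M a b * (if x = y ∧ a = b then (2:ℂ)^n else 0) := by
    intro b
    rw [Finset.sum_comm]
    refine Finset.sum_congr rfl fun a _ => ?_
    rw [← pauliN_pair_sum n x a b y, Finset.mul_sum]
    exact Finset.sum_congr rfl fun p _ => by ring
  simp_rw [h1]
  by_cases hxy : x = y
  · simp only [hxy, if_true, true_and, mul_ite, mul_zero]
    rw [Finset.sum_comm]
    simp only [Finset.sum_ite_eq, Finset.mem_univ, if_true]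
    simp [Matrix.trace, Matrix.diag, Finset.mul_sum, mul_comm]
  · simp [hxy]

lemma sum_trace_pauli (n : ℕ) (M N : Matrix (Fin n → Fin 2) (Fin n → Fin 2) ℂ) :
    ∑ p : Fin n → Fin 4, (pauliN n p * M * pauliN n p * N).trace
      = (2:ℂ)^n * M.trace * N.trace := by
  have h : ∑ p : Fin n → Fin 4, (pauliN n p * M * pauliN n p * N).trace
      = ((∑ p : Fin n → Fin 4, pauliN n p * M * pauliN n p) * N).trace := by
    rw [Finset.sum_mul, trace_sum]
  rw [h, pauli_design, Matrix.smul_mul, trace_smul, one_mul, smul_eq_mul, mul_assoc]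

end PauliLemmas

section TraceLemmas

variable {m : Type*} [Fintype m] [DecidableEq m]

lemma tr_conj_pair (A B S : Matrix m m ℂ) :
    ((A*S*Aᴴ) * (B*S*Bᴴ)).trace = (S * (Aᴴ*B) * S * (Bᴴ*A)).trace := by
  rw [show (A*S*Aᴴ) * (B*S*Bᴴ) = A * (S * (Aᴴ*B) * S * Bᴴ) by
    simp only [Matrix.mul_assoc], Matrix.trace_mul_comm]
  simp only [Matrix.mul_assoc]

lemma trace_conjTranspose_mul_self_re_nonneg (M : Matrix m m ℂ) :
    0 ≤ (Mᴴ * M).trace.re := by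
  simp only [Matrix.trace, Matrix.diag, Matrix.mul_apply, Matrix.conjTranspose_apply,
    Complex.re_sum]
  refine Finset.sum_nonneg fun i _ => Finset.sum_nonneg fun j _ => ?_
  rw [Complex.star_def, ← Complex.normSq_eq_conj_mul_self, Complex.ofReal_re]
  exact Complex.normSq_nonneg _

lemma kron_conjTranspose (A B : Matrix m m ℂ) : (A ⊗ₖ B)ᴴ = Aᴴ ⊗ₖ Bᴴ := by
  ext ⟨i, j⟩ ⟨k, l⟩
  simp [Matrix.conjTranspose_apply, Matrix.kroneckerMap_apply, star_mul', mul_comm]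

lemma map_conj_conjTranspose (A : Matrix m m ℂ) : (A.map (starRingEnd ℂ))ᴴ = Aᵀ := by
  ext i j
  simp [Matrix.conjTranspose_apply, Matrix.transpose_apply]

lemma transpose_mul_map_conj (A B : Matrix m m ℂ) :
    Aᵀ * B.map (starRingEnd ℂ) = (Aᴴ * B).map (starRingEnd ℂ) := by
  ext i j
  simp [Matrix.mul_apply, Matrix.transpose_apply, Matrix.conjTranspose_apply, map_sum]

lemma trace_map_conj (A : Matrix m m ℂ) :
    (A.map (starRingEnd ℂ)).trace = star A.trace := by
  simp [Matrix.trace, Matrix.diag, star_sum]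

lemma kron_cross_trace (C D : Matrix m m ℂ) :
    ((C ⊗ₖ C.map (starRingEnd ℂ))ᴴ * (D ⊗ₖ D.map (starRingEnd ℂ))).trace
      = (Cᴴ * D).trace * star ((Cᴴ * D).trace) := by
  rw [kron_conjTranspose, ← Matrix.mul_kronecker_mul, Matrix.trace_kronecker,
    map_conj_conjTranspose, transpose_mul_map_conj, trace_map_conj]

end TraceLemmas

/-- If `D⁺(U₁σ_pU₁†, U₂σ_pU₂†) ≤ δ` for every `n`-qubit Pauli `σ_p`, then
`D(U₁, U₂) ≤ δ`. -/
theorem close_on_paulis_implies_close (n : ℕ) (hn : 1 ≤ n)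
    (U₁ U₂ : Matrix.unitaryGroup (Fin n → Fin 2) ℂ) (δ : ℝ) (hδ : 0 ≤ δ)
    (h : ∀ p : Fin n → Fin 4,
      Dplus
        ((U₁ : Matrix (Fin n → Fin 2) (Fin n → Fin 2) ℂ) * pauliN n p *
          (U₁ : Matrix (Fin n → Fin 2) (Fin n → Fin 2) ℂ)ᴴ)
        ((U₂ : Matrix (Fin n → Fin 2) (Fin n → Fin 2) ℂ) * pauliN n p *
          (U₂ : Matrix (Fin n → Fin 2) (Fin n → Fin 2) ℂ)ᴴ) ≤ δ) :
    Ddist (U₁ : Matrix (Fin n → Fin 2) (Fin n → Fin 2) ℂ)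
        (U₂ : Matrix (Fin n → Fin 2) (Fin n → Fin 2) ℂ) ≤ δ := by
  classical
  set A : Matrix (Fin n → Fin 2) (Fin n → Fin 2) ℂ := (U₁ : Matrix (Fin n → Fin 2) (Fin n → Fin 2) ℂ) with hAdef
  set B : Matrix (Fin n → Fin 2) (Fin n → Fin 2) ℂ := (U₂ : Matrix (Fin n → Fin 2) (Fin n → Fin 2) ℂ) with hBdef
  have hA : Aᴴ * A = 1 := by
    have := Matrix.UnitaryGroup.star_mul_self U₁
    rwa [Matrix.star_eq_conjTranspose] at this
  have hB : Bᴴ * B = 1 := by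
    have := Matrix.UnitaryGroup.star_mul_self U₂
    rwa [Matrix.star_eq_conjTranspose] at this
  -- complex and real dimensions
  set c : ℝ := (Fintype.card (Fin n → Fin 2) : ℝ) with hcdef
  have hcard : Fintype.card (Fin n → Fin 2) = 2 ^ n := by
    simp [Fintype.card_fun]
  have hc : c = (2:ℝ) ^ n := by rw [hcdef, hcard]; push_cast; ring
  have hcpos : (0:ℝ) < c := by rw [hc]; positivity
  set t : ℂ := (Aᴴ * B).trace with htdef
  have hBA : (Bᴴ * A).trace = star t := by
    rw [htdef, ← Matrix.trace_conjTranspose, Matrix.conjTranspose_mul,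
      Matrix.conjTranspose_conjTranspose]
  -- cross-trace sums over the Paulis
  have cross : ∀ (C D : Matrix (Fin n → Fin 2) (Fin n → Fin 2) ℂ),
      ∑ p : Fin n → Fin 4,
          ((C * pauliN n p * Cᴴ)ᴴ * (D * pauliN n p * Dᴴ)).trace
        = (2:ℂ)^n * (Cᴴ*D).trace * (Dᴴ*C).trace := by
    intro C D
    have herm : ∀ p : Fin n → Fin 4, (C * pauliN n p * Cᴴ)ᴴ = C * pauliN n p * Cᴴ := by
      intro p
      simp [Matrix.conjTranspose_mul, pauliN_herm, Matrix.mul_assoc]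
    calc ∑ p : Fin n → Fin 4, ((C * pauliN n p * Cᴴ)ᴴ * (D * pauliN n p * Dᴴ)).trace
        = ∑ p : Fin n → Fin 4, (pauliN n p * (Cᴴ*D) * pauliN n p * (Dᴴ*C)).trace := by
          refine Finset.sum_congr rfl fun p _ => ?_
          rw [herm p, tr_conj_pair]
      _ = (2:ℂ)^n * (Cᴴ*D).trace * (Dᴴ*C).trace := sum_trace_pauli n _ _
  -- the summed squared Frobenius norms
  set E : (Fin n → Fin 4) → Matrix (Fin n → Fin 2) (Fin n → Fin 2) ℂ :=
    fun p => A * pauliN n p * Aᴴ - B * pauliN n p * Bᴴ with hEdef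
  have hd1 : (1 : Matrix (Fin n → Fin 2) (Fin n → Fin 2) ℂ).trace = ((2:ℂ)^n) := by
    rw [Matrix.trace_one, hcard]; push_cast; ring
  have sumE : ∑ p : Fin n → Fin 4, ((E p)ᴴ * E p).trace
      = (2:ℂ)^n * ((2:ℂ)^n * (2:ℂ)^n + (2:ℂ)^n * (2:ℂ)^n - t * star t - star t * t) := by
    have expand : ∀ p : Fin n → Fin 4, ((E p)ᴴ * E p).trace
        = ((A * pauliN n p * Aᴴ)ᴴ * (A * pauliN n p * Aᴴ)).trace
          + ((B * pauliN n p * Bᴴ)ᴴ * (B * pauliN n p * Bᴴ)).trace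
          - ((A * pauliN n p * Aᴴ)ᴴ * (B * pauliN n p * Bᴴ)).trace
          - ((B * pauliN n p * Bᴴ)ᴴ * (A * pauliN n p * Aᴴ)).trace := by
      intro p
      rw [hEdef]
      simp only [Matrix.conjTranspose_sub, Matrix.sub_mul, Matrix.mul_sub, Matrix.trace_sub]
      ring
    rw [Finset.sum_congr rfl fun p _ => expand p]
    simp only [Finset.sum_add_distrib, Finset.sum_sub_distrib]
    rw [cross A A, cross B B, cross A B, cross B A, hA, hB, hd1, ← htdef, hBA]
    ring
  -- the Kronecker difference
  set F : Matrix ((Fin n → Fin 2) × (Fin n → Fin 2)) ((Fin n → Fin 2) × (Fin n → Fin 2)) ℂ :=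
    A ⊗ₖ A.map (starRingEnd ℂ) - B ⊗ₖ B.map (starRingEnd ℂ) with hFdef
  have traceF : (Fᴴ * F).trace
      = (2:ℂ)^n * (2:ℂ)^n + (2:ℂ)^n * (2:ℂ)^n - t * star t - star t * t := by
    rw [hFdef]
    simp only [Matrix.conjTranspose_sub, Matrix.sub_mul, Matrix.mul_sub, Matrix.trace_sub]
    rw [kron_cross_trace A A, kron_cross_trace B B, kron_cross_trace A B, kron_cross_trace B A,
      hA, hB, hd1, ← htdef, hBA, star_star]
    have hstar : star ((2:ℂ)^n) = (2:ℂ)^n := by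
      simp
    rw [hstar]
    ring
  -- relate the sums
  have key : ∑ p : Fin n → Fin 4, ((E p)ᴴ * E p).trace = (2:ℂ)^n * (Fᴴ * F).trace := by
    rw [sumE, traceF]
  -- real parts
  set r : ℝ := ((Fᴴ * F).trace).re with hrdef
  have hrsum : ∑ p : Fin n → Fin 4, (((E p)ᴴ * E p).trace).re = (2:ℝ)^n * r := by
    rw [← Complex.re_sum, key]
    have : ((2:ℂ)^n) = (((2:ℝ)^n : ℝ) : ℂ) := by push_cast; ring
    rw [this, Complex.re_ofReal_mul]
  -- per-Pauli bound
  have hbound : ∀ p : Fin n → Fin 4, (((E p)ᴴ * E p).trace).re ≤ 2 * c * δ^2 := by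
    intro p
    have hp := h p
    rw [Dplus, frobNorm, ← hcdef] at hp
    have hnn : 0 ≤ (((E p)ᴴ * E p).trace).re := trace_conjTranspose_mul_self_re_nonneg _
    have hsq : (0:ℝ) < Real.sqrt (2 * c) := Real.sqrt_pos.mpr (by positivity)
    have h1 : Real.sqrt ((((E p)ᴴ * E p).trace).re) ≤ Real.sqrt (2 * c) * δ := by
      rw [one_div, inv_mul_le_iff₀ hsq] at hp
      exact hp
    calc (((E p)ᴴ * E p).trace).re
        = Real.sqrt ((((E p)ᴴ * E p).trace).re) ^ 2 := (Real.sq_sqrt hnn).symm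
      _ ≤ (Real.sqrt (2 * c) * δ) ^ 2 := by
          apply pow_le_pow_left₀ (Real.sqrt_nonneg _) h1
      _ = 2 * c * δ^2 := by
          rw [mul_pow, Real.sq_sqrt (by positivity)]
  -- sum the bounds
  have hsum : (2:ℝ)^n * r ≤ (4:ℝ)^n * (2 * c * δ^2) := by
    rw [← hrsum]
    calc ∑ p : Fin n → Fin 4, (((E p)ᴴ * E p).trace).re
        ≤ ∑ _p : Fin n → Fin 4, 2 * c * δ^2 := Finset.sum_le_sum fun p _ => hbound p
      _ = (4:ℝ)^n * (2 * c * δ^2) := by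
          rw [Finset.sum_const, Finset.card_univ]
          simp only [Fintype.card_fun, Fintype.card_fin, nsmul_eq_mul]
          push_cast
          ring
  have hr : r ≤ 2 * c^2 * δ^2 := by
    have h4 : (4:ℝ)^n = (2:ℝ)^n * (2:ℝ)^n := by
      rw [← mul_pow]; norm_num
    have h2pos : (0:ℝ) < (2:ℝ)^n := by positivity
    have h5 : (2:ℝ)^n * r ≤ (2:ℝ)^n * (2 * c^2 * δ^2) := by
      calc (2:ℝ)^n * r ≤ (4:ℝ)^n * (2 * c * δ^2) := hsum
        _ = (2:ℝ)^n * (2 * c^2 * δ^2) := by rw [h4, hc]; ring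
    exact le_of_mul_le_mul_left h5 h2pos
  -- finish
  rw [Ddist, frobNorm]
  rw [← hFdef, ← hrdef, ← hcdef]
  have hs2 : (0:ℝ) < Real.sqrt (2 * c^2) := Real.sqrt_pos.mpr (by positivity)
  have h1 : Real.sqrt r ≤ Real.sqrt (2 * c^2) * δ := by
    have : Real.sqrt r ≤ Real.sqrt (2 * c^2 * δ^2) := Real.sqrt_le_sqrt hr
    rwa [show 2 * c^2 * δ^2 = (2 * c^2) * δ^2 by ring, Real.sqrt_mul (by positivity),
      Real.sqrt_sq hδ] at this
  calc (1 / Real.sqrt (2 * c^2)) * Real.sqrt r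
      ≤ (1 / Real.sqrt (2 * c^2)) * (Real.sqrt (2 * c^2) * δ) := by
        apply mul_le_mul_of_nonneg_left h1 (by positivity)
    _ = δ := by field_simp
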